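/- For every integer d ≥ 3, the quantity α_d = d·I_{1/2}(1/(d−2), (d−1)/(d−2)) − (d−1) is strictly positive. -/

import Mathlib

open Real

/-- The regularized incomplete beta function `I_x(a,b)`. -/
noncomputable def regIncBeta (x a b : ℝ) : ℝ :=
  (Real.Gamma (a + b) / (Real.Gamma a * Real.Gamma b)) *
    ∫ t in (0:ℝ)..x, t ^ (a - 1) * (1 - t) ^ (b - 1)

/-! With `a = 1/(d-2)` the claim reads `I_{1/2}(a, a+1) > (a+1)/(2a+1)`. Let `J` and `L` be the
integrals of `t^(a-1) (1-t)^a` and `t^a (1-t)^(a-1)` over `[0, 1/2]`. The reflection `t ↦ 1 - t`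
turns the complete beta integral into `J + L`, so the claim becomes `(a+1) L < a J`.
Differentiating `t^a (1-t)^a` gives `a (J - L) = 4^(-a)`, while `(1-t)^(a-1) ≤ 2^(1-a)` on
`[0, 1/2]` gives `L ≤ 4^(-a)/(a+1) < 4^(-a)`. -/

open intervalIntegral MeasureTheory

theorem Real.Gamma_mul_Gamma_eq_betaIntegral {a b : ℝ} (ha : 0 < a) (hb : 0 < b) :
    Gamma a * Gamma b = Gamma (a + b) * ∫ t in (0:ℝ)..1, t ^ (a - 1) * (1 - t) ^ (b - 1) := by
  have h := Complex.Gamma_mul_Gamma_eq_betaIntegral (s := a) (t := b)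
    (by simpa using ha) (by simpa using hb)
  have hint : Complex.betaIntegral a b
      = ((∫ t in (0:ℝ)..1, t ^ (a - 1) * (1 - t) ^ (b - 1) : ℝ) : ℂ) := by
    rw [Complex.betaIntegral, ← integral_ofReal]
    refine integral_congr fun t ht => ?_
    rw [Set.uIcc_of_le zero_le_one] at ht
    push_cast
    rw [Complex.ofReal_cpow ht.1, Complex.ofReal_cpow (sub_nonneg.2 ht.2)]
    push_cast
    ring
  rw [hint, Complex.Gamma_ofReal, Complex.Gamma_ofReal, ← Complex.ofReal_add,
    Complex.Gamma_ofReal] at h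
  exact_mod_cast h

theorem regIncBeta_eq_div {a b : ℝ} (ha : 0 < a) (hb : 0 < b) (x : ℝ) :
    regIncBeta x a b = (∫ t in (0:ℝ)..x, t ^ (a - 1) * (1 - t) ^ (b - 1)) /
      ∫ t in (0:ℝ)..1, t ^ (a - 1) * (1 - t) ^ (b - 1) := by
  rw [regIncBeta, Real.Gamma_mul_Gamma_eq_betaIntegral ha hb, div_mul_eq_div_div,
    div_self (Real.Gamma_pos_of_pos (add_pos ha hb)).ne', one_div_mul_eq_div]

theorem betaIntegral_pos {a b : ℝ} (ha : 0 < a) (hb : 0 < b) :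
    0 < ∫ t in (0:ℝ)..1, t ^ (a - 1) * (1 - t) ^ (b - 1) := by
  have h := Real.Gamma_mul_Gamma_eq_betaIntegral ha hb
  have hprod := mul_pos (Real.Gamma_pos_of_pos ha) (Real.Gamma_pos_of_pos hb)
  rw [h] at hprod
  exact pos_of_mul_pos_right hprod (Real.Gamma_pos_of_pos (add_pos ha hb)).le

theorem integral_half_one_rpow_mul_one_sub_rpow (a b : ℝ) :
    ∫ t in (1/2:ℝ)..1, t ^ a * (1 - t) ^ b = ∫ t in (0:ℝ)..(1/2), t ^ b * (1 - t) ^ a := by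
  have h := integral_comp_sub_left
    (fun t : ℝ => t ^ a * (1 - t) ^ b) (a := 0) (b := 1/2) 1
  norm_num at h
  rw [← h]
  exact integral_congr fun t _ => mul_comm _ _

theorem intervalIntegrable_rpow_mul_one_sub_rpow {a b : ℝ} (ha : -1 < a) (hb : 0 ≤ b)
    (u v : ℝ) :
    IntervalIntegrable (fun t : ℝ => t ^ a * (1 - t) ^ b) volume u v :=
  (intervalIntegrable_rpow' ha).mul_continuousOn
    ((Real.continuous_rpow_const hb).comp (continuous_sub_left 1)).continuousOn

theorem intervalIntegrable_rpow_mul_one_sub_rpow_zero_half {a : ℝ} (ha : -1 < a) (b : ℝ) :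
    IntervalIntegrable (fun t : ℝ => t ^ a * (1 - t) ^ b) volume 0 (1/2) := by
  refine (intervalIntegrable_rpow' ha).mul_continuousOn fun t ht => ?_
  rw [Set.uIcc_of_le (by norm_num)] at ht
  exact ((Real.continuousAt_rpow_const _ _ (Or.inl (by linarith [ht.2]))).comp
    (continuous_sub_left 1).continuousAt).continuousWithinAt

theorem mul_integral_zero_half_sub_mul_integral_zero_half {a b : ℝ} (ha : 0 < a) (hb : 0 < b) :
    a * (∫ t in (0:ℝ)..(1/2), t ^ (a - 1) * (1 - t) ^ b)
      - b * (∫ t in (0:ℝ)..(1/2), t ^ a * (1 - t) ^ (b - 1)) = (1/2) ^ (a + b) := by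
  have hderiv : ∀ t ∈ Set.Ioo (0:ℝ) (1/2), HasDerivAt (fun t : ℝ => t ^ a * (1 - t) ^ b)
      (a * (t ^ (a - 1) * (1 - t) ^ b) - b * (t ^ a * (1 - t) ^ (b - 1))) t := by
    intro t ht
    have h₁ := Real.hasDerivAt_rpow_const (x := t) (p := a) (Or.inl ht.1.ne')
    have h₂ : HasDerivAt (fun t : ℝ => (1 - t) ^ b) (b * (1 - t) ^ (b - 1) * -1) t :=
      (Real.hasDerivAt_rpow_const (Or.inl (by linarith [ht.2]))).comp t
        ((hasDerivAt_id t).const_sub 1)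
    exact (h₁.mul h₂).congr_deriv (by ring)
  have hcont : ContinuousOn (fun t : ℝ => t ^ a * (1 - t) ^ b) (Set.Icc 0 (1/2)) :=
    ((Real.continuous_rpow_const ha.le).mul
      ((Real.continuous_rpow_const hb.le).comp (continuous_sub_left 1))).continuousOn
  have hint₁ := intervalIntegrable_rpow_mul_one_sub_rpow_zero_half (by linarith : -1 < a - 1) b
  have hint₂ := intervalIntegrable_rpow_mul_one_sub_rpow_zero_half (by linarith : -1 < a) (b - 1)
  rw [← intervalIntegral.integral_const_mul, ← intervalIntegral.integral_const_mul,
    ← integral_sub (hint₁.const_mul a) (hint₂.const_mul b),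
    integral_eq_sub_of_hasDerivAt_of_le (by norm_num) hcont hderiv
      ((hint₁.const_mul a).sub (hint₂.const_mul b))]
  norm_num [Real.zero_rpow ha.ne', ← Real.rpow_add]

theorem integral_zero_half_rpow_mul_one_sub_rpow_le {a b : ℝ} (ha : -1 < a) (hb : b ≤ 1) :
    ∫ t in (0:ℝ)..(1/2), t ^ a * (1 - t) ^ (b - 1) ≤ (1/2) ^ (a + b) / (a + 1) := by
  calc ∫ t in (0:ℝ)..(1/2), t ^ a * (1 - t) ^ (b - 1)
      ≤ ∫ t in (0:ℝ)..(1/2), (1/2 : ℝ) ^ (b - 1) * t ^ a := by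
        refine integral_mono_on (by norm_num) ?_
          ((intervalIntegrable_rpow' ha).const_mul _) fun t ht => ?_
        · exact intervalIntegrable_rpow_mul_one_sub_rpow_zero_half ha _
        · rw [mul_comm]
          exact mul_le_mul_of_nonneg_right (Real.rpow_le_rpow_of_nonpos (by norm_num)
            (by linarith [ht.2]) (by linarith)) (Real.rpow_nonneg ht.1 a)
    _ = (1/2) ^ (a + b) / (a + 1) := by
        rw [intervalIntegral.integral_const_mul, integral_rpow (Or.inl ha),
          Real.zero_rpow (by linarith), sub_zero, ← mul_div_assoc,
          ← Real.rpow_add (by norm_num)]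
        ring_nf

theorem div_lt_regIncBeta_half {a : ℝ} (ha : 0 < a) (ha1 : a ≤ 1) :
    (a + 1) / (2 * a + 1) < regIncBeta (1/2) a (a + 1) := by
  have ha' : 0 < a + 1 := by linarith
  have hB := betaIntegral_pos ha ha'
  rw [regIncBeta_eq_div ha ha']
  simp only [add_sub_cancel_right] at hB ⊢
  set J := ∫ t in (0:ℝ)..(1/2), t ^ (a - 1) * (1 - t) ^ a
  set L := ∫ t in (0:ℝ)..(1/2), t ^ a * (1 - t) ^ (a - 1)
  have hsplit : ∫ t in (0:ℝ)..1, t ^ (a - 1) * (1 - t) ^ a = J + L := by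
    rw [← integral_add_adjacent_intervals
      (intervalIntegrable_rpow_mul_one_sub_rpow (by linarith) ha.le 0 (1/2))
      (intervalIntegrable_rpow_mul_one_sub_rpow (by linarith) ha.le (1/2) 1),
      integral_half_one_rpow_mul_one_sub_rpow]
  have hJL : a * J - a * L = (1/2) ^ (a + a) :=
    mul_integral_zero_half_sub_mul_integral_zero_half ha ha
  have hL : L < (1/2) ^ (a + a) :=
    (integral_zero_half_rpow_mul_one_sub_rpow_le (by linarith) ha1).trans_lt
      (div_lt_self (by positivity) (by linarith))
  rw [hsplit] at hB ⊢
  rw [div_lt_div_iff₀ (by positivity) hB]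
  linarith

/-- For every integer `d ≥ 3`, `α_d > 0`. -/
theorem alpha_pos (d : ℕ) (hd : 3 ≤ d) :
    0 < (d : ℝ) * regIncBeta (1/2) (1 / ((d : ℝ) - 2)) (((d : ℝ) - 1) / ((d : ℝ) - 2))
        - ((d : ℝ) - 1) := by
  have hd' : (3:ℝ) ≤ d := by exact_mod_cast hd
  have hd2 : (0:ℝ) < d - 2 := by linarith
  set a := 1 / ((d:ℝ) - 2) with ha_def
  have ha : 0 < a := by positivity
  have ha1 : a ≤ 1 := by rw [ha_def, div_le_one hd2]; linarith
  have hb : ((d:ℝ) - 1) / (d - 2) = a + 1 := by rw [ha_def]; field_simp; ring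
  have hratio : (a + 1) / (2 * a + 1) = ((d:ℝ) - 1) / d := by rw [ha_def]; field_simp; ring
  have h := div_lt_regIncBeta_half ha ha1
  rw [hratio, div_lt_iff₀ (by positivity)] at h
  rw [hb]
  linarith
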